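/- Let (W,S) be a Coxeter system whose group W is finite. For all u, w ∈ W there exists v ∈ W with v ≤ u, v ≤ w and al(v,u) + al(v,w) = ℓ′(u·w⁻¹). -/

import Mathlib

/-!
Write `u * w⁻¹ = t₁ ⋯ tₖ` with `k = ℓ′(u w⁻¹)` reflections. This is a walk
`u = x₀, x₁, …, xₖ = w` with `xⱼ = tⱼ₊₁ ⋯ tₖ w`, along which the length changes at every step.
Choose such a factorization minimizing the potential `∑ ℓ(xⱼ)`. At a peak `xⱼ` (both neighbours
shorter), `tⱼ` and `tⱼ₊₁` are distinct left inversions of `y = xⱼ` (equal ones would cancel,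
against the minimality of `k`). By the strong exchange property both occur in the left inversion
sequence of a reduced word for `y`, and deleting both letters shows that `tⱼ tⱼ₊₁ y` or
`tⱼ₊₁ tⱼ y` has length at most `ℓ(y) - 2`. Conjugating one of the two reflections by the other
moves the peak down to that element and lowers the potential. So the lengths decrease to a
minimum `x_K` and then increase, which gives Bruhat paths from `x_K` to `u` and to `w` with
`k` edges in total. Conversely, paths from `v` to `u` and to `w` combine into a factorization of
`u w⁻¹` into `al(v,u) + al(v,w)` reflections.

Strong exchange comes from the action of `W` on `W × ZMod 2` in which `s` acts by
`(t, z) ↦ (s t s, z + [t = s])`; the braid relations hold because `(s s')ᵐ = 1` makes the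
indicator sums periodic.
-/


/-- Directed edge of the Bruhat graph of a Coxeter system. -/
def edge {B W : Type*} [Group W] {M : CoxeterMatrix B} (cs : CoxeterSystem M W)
    (x y : W) : Prop :=
  (∃ t : W, cs.IsReflection t ∧ y = t * x) ∧ cs.length x < cs.length y

/-- The Bruhat order: `u ≤ w` iff `u = w` or there is a directed path from `u` to `w`. -/
def bruhatLe {B W : Type*} [Group W] {M : CoxeterMatrix B} (cs : CoxeterSystem M W)
    (u w : W) : Prop :=
  Relation.ReflTransGen (edge cs) u w

/-- `reachesIn r m u w` : there is a directed path with `m` edges from `u` to `w`. -/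
def reachesIn {α : Type*} (r : α → α → Prop) : ℕ → α → α → Prop
  | 0, u, w => u = w
  | (m+1), u, w => ∃ v, r u v ∧ reachesIn r m v w

/-- `al u w` : the minimum number of edges of a directed path from `u` to `w`
in the Bruhat graph. -/
noncomputable def al {B W : Type*} [Group W] {M : CoxeterMatrix B} (cs : CoxeterSystem M W)
    (u w : W) : ℕ :=
  sInf {m | reachesIn (edge cs) m u w}

/-- The absolute length: least `k` such that `v` is a product of `k` reflections. -/
noncomputable def absLen {B W : Type*} [Group W] {M : CoxeterMatrix B} (cs : CoxeterSystem M W)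
    (v : W) : ℕ :=
  sInf {k | ∃ l : List W, l.length = k ∧ (∀ t ∈ l, cs.IsReflection t) ∧ l.prod = v}

section ParityPerm

open scoped Classical

variable {G : Type*} [Group G]

noncomputable def parityPerm {y : G} (hy : y * y = 1) : Equiv.Perm (G × ZMod 2) :=
  Function.Involutive.toPerm (fun p => (y * p.1 * y⁻¹, p.2 + if p.1 = y then 1 else 0)) <| by
    rintro ⟨t, z⟩
    have hy' : y⁻¹ = y := inv_eq_of_mul_eq_one_right hy
    refine Prod.ext ?_ ?_
    · simp only [hy', ← mul_assoc, hy, one_mul]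
      rw [mul_assoc, hy, mul_one]
    · simp [mul_inv_eq_iff_eq_mul, add_assoc, CharTwo.add_self_eq_zero]

lemma parityPerm_apply {y : G} (hy : y * y = 1) (t : G) (z : ZMod 2) :
    parityPerm hy (t, z) = (y * t * y⁻¹, z + if t = y then 1 else 0) :=
  rfl

lemma parityPerm_mul_pow_apply {y₁ y₂ : G} (h₁ : y₁ * y₁ = 1) (h₂ : y₂ * y₂ = 1) (k : ℕ)
    (t : G) (z : ZMod 2) :
    ((parityPerm h₁ * parityPerm h₂) ^ k) (t, z) =
      ((y₁ * y₂) ^ k * t * ((y₁ * y₂) ^ k)⁻¹,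
        z + ∑ n ∈ Finset.range (2 * k), if t = (y₂ * y₁) ^ n * y₂ then 1 else 0) := by
  have h₁' : y₁⁻¹ = y₁ := inv_eq_of_mul_eq_one_right h₁
  have h₂' : y₂⁻¹ = y₂ := inv_eq_of_mul_eq_one_right h₂
  induction k with
  | zero => simp
  | succ k ih =>
    have hinv : ((y₁ * y₂) ^ k)⁻¹ = (y₂ * y₁) ^ k := by rw [← inv_pow, mul_inv_rev, h₁', h₂']
    -- `y₂` conjugates `y₁ y₂` to its inverse `y₂ y₁`
    have hsemi : y₂ * (y₁ * y₂) ^ k = (y₂ * y₁) ^ k * y₂ :=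
      (SemiconjBy.pow_right (mul_assoc y₂ y₁ y₂).symm k).eq
    have key : ∀ x, (y₁ * y₂) ^ k * t * ((y₁ * y₂) ^ k)⁻¹ = x * y₂ ↔
        t = (y₂ * y₁) ^ k * x * (y₂ * y₁) ^ k * y₂ := by
      intro x
      rw [mul_inv_eq_iff_eq_mul, ← eq_inv_mul_iff_mul_eq, mul_assoc x, hsemi, hinv]
      simp only [mul_assoc]
    have h0 : (y₁ * y₂) ^ k * t * ((y₁ * y₂) ^ k)⁻¹ = y₂ ↔ t = (y₂ * y₁) ^ (2 * k) * y₂ := by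
      simpa only [one_mul, mul_one, two_mul, pow_add, mul_assoc] using key 1
    have h1 : y₂ * ((y₁ * y₂) ^ k * t * ((y₁ * y₂) ^ k)⁻¹) * y₂⁻¹ = y₁ ↔
        t = (y₂ * y₁) ^ (2 * k + 1) * y₂ := by
      rw [mul_inv_eq_iff_eq_mul, ← eq_inv_mul_iff_mul_eq, h₂', ← mul_assoc, key, ← pow_succ,
        ← pow_add]
      ring_nf
    rw [pow_succ', Equiv.Perm.mul_apply, ih, Equiv.Perm.mul_apply, parityPerm_apply,
      parityPerm_apply]
    refine Prod.ext ?_ ?_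
    · simp only [pow_succ', mul_inv_rev]
      group
    · simp only [if_congr h0 rfl rfl, if_congr h1 rfl rfl, Nat.mul_succ, Finset.sum_range_succ]
      ring

lemma parityPerm_mul_pow_eq_one {y₁ y₂ : G} (h₁ : y₁ * y₁ = 1) (h₂ : y₂ * y₂ = 1) {m : ℕ}
    (hm : (y₁ * y₂) ^ m = 1) : (parityPerm h₁ * parityPerm h₂) ^ m = 1 := by
  refine Equiv.ext fun ⟨t, z⟩ => ?_
  have hm' : (y₂ * y₁) ^ m = 1 := by
    rw [← inv_eq_of_mul_eq_one_right h₁, ← inv_eq_of_mul_eq_one_right h₂, ← mul_inv_rev,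
      inv_pow, hm, inv_one]
  -- the summand is `m`-periodic, so each term occurs twice
  have hsum : (∑ n ∈ Finset.range (2 * m),
      if t = (y₂ * y₁) ^ n * y₂ then 1 else 0 : ZMod 2) = 0 := by
    simp only [two_mul, Finset.sum_range_add, pow_add, hm', one_mul, CharTwo.add_self_eq_zero]
  rw [parityPerm_mul_pow_apply, hm, hsum]
  simp

end ParityPerm

namespace CoxeterSystem

open scoped Classical

variable {B W : Type*} [Group W] {M : CoxeterMatrix B} (cs : CoxeterSystem M W)

noncomputable def parityRep : W →* Equiv.Perm (W × ZMod 2) :=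
  cs.lift ⟨fun i => parityPerm (cs.simple_mul_simple_self i),
    fun i j => parityPerm_mul_pow_eq_one _ _ (cs.simple_mul_simple_pow i j)⟩

/-- Counts, mod 2, the occurrences of `t` in the right inversion sequence of any word for `w`. -/
noncomputable def inversionParity (w t : W) : ZMod 2 := (cs.parityRep w (t, 0)).2

lemma parityRep_simple (i : B) :
    cs.parityRep (cs.simple i) = parityPerm (cs.simple_mul_simple_self i) :=
  cs.lift_apply_simple _ i

lemma parityRep_apply (w t : W) (z : ZMod 2) :
    cs.parityRep w (t, z) = (w * t * w⁻¹, z + cs.inversionParity w t) := by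
  induction w using cs.simple_induction_left generalizing t z with
  | one => simp [inversionParity]
  | mul_simple_left w i ih =>
    have step : ∀ z, cs.parityRep (cs.simple i * w) (t, z) =
        (cs.simple i * w * t * (cs.simple i * w)⁻¹,
          z + cs.inversionParity w t + if w * t * w⁻¹ = cs.simple i then 1 else 0) := by
      intro z
      rw [map_mul, Equiv.Perm.mul_apply, ih, parityRep_simple, parityPerm_apply]
      simp only [mul_inv_rev, mul_assoc]
    rw [inversionParity, step, step, zero_add, add_assoc]

lemma inversionParity_mul (x y t : W) :
    cs.inversionParity (x * y) t =
      cs.inversionParity y t + cs.inversionParity x (y * t * y⁻¹) := by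
  have h := cs.parityRep_apply (x * y) t 0
  rw [map_mul, Equiv.Perm.mul_apply, parityRep_apply, parityRep_apply] at h
  simpa using (congrArg Prod.snd h).symm

lemma inversionParity_one (t : W) : cs.inversionParity 1 t = 0 := by
  simp [inversionParity]

lemma inversionParity_simple (i : B) (t : W) :
    cs.inversionParity (cs.simple i) t = if t = cs.simple i then 1 else 0 := by
  simp [inversionParity, parityRep_simple, parityPerm_apply]

lemma mem_rightInvSeq_of_inversionParity_eq_one {ω : List B} {t : W}
    (h : cs.inversionParity (cs.wordProd ω) t = 1) : t ∈ cs.rightInvSeq ω := by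
  induction ω with
  | nil => simp [inversionParity_one] at h
  | cons i ω ih =>
    rw [wordProd_cons, inversionParity_mul, inversionParity_simple] at h
    rw [rightInvSeq, List.mem_cons]
    by_cases hi : cs.wordProd ω * t * (cs.wordProd ω)⁻¹ = cs.simple i
    · left
      rw [← hi]
      group
    · rw [if_neg hi, add_zero] at h
      exact Or.inr (ih h)

lemma getD_leftInvSeq_eraseIdx_of_lt (ω : List B) {a b : ℕ} (hab : a < b) :
    (cs.leftInvSeq (ω.eraseIdx b)).getD a 1 = (cs.leftInvSeq ω).getD a 1 := by
  rw [getD_leftInvSeq, getD_leftInvSeq, List.take_eraseIdx_eq_take_of_le _ _ _ hab.le,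
    List.getElem?_eraseIdx_of_lt hab]

lemma length_getD_leftInvSeq_mul_getD_leftInvSeq_mul_wordProd_add_two_le (ω : List B)
    {a b : ℕ} (hab : a < b) (hb : b < ω.length) :
    cs.length ((cs.leftInvSeq ω).getD a 1 * (cs.leftInvSeq ω).getD b 1 * cs.wordProd ω) + 2
      ≤ ω.length := by
  rw [mul_assoc, getD_leftInvSeq_mul_wordProd, ← cs.getD_leftInvSeq_eraseIdx_of_lt ω hab,
    getD_leftInvSeq_mul_wordProd]
  have := cs.length_wordProd_le ((ω.eraseIdx b).eraseIdx a)
  simp only [List.length_eraseIdx] at this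
  grind

variable {cs}

lemma IsReflection.inversionParity_self {t : W} (ht : cs.IsReflection t) :
    cs.inversionParity t t = 1 := by
  obtain ⟨w, i, rfl⟩ := ht
  have hs : cs.simple i * cs.simple i * (cs.simple i)⁻¹ = cs.simple i := by group
  have hw : w⁻¹ * (w * cs.simple i * w⁻¹) * w⁻¹⁻¹ = cs.simple i := by group
  have h1 := cs.inversionParity_mul w w⁻¹ (w * cs.simple i * w⁻¹)
  rw [mul_inv_cancel, inversionParity_one, hw] at h1
  rw [inversionParity_mul, hw, inversionParity_mul, hs, inversionParity_simple, if_pos rfl,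
    ← add_assoc, add_comm _ 1, add_assoc, ← h1, add_zero]

lemma IsRightInversion.inversionParity_eq_one {w t : W} (h : cs.IsRightInversion w t) :
    cs.inversionParity w t = 1 := by
  obtain ⟨ht, hlt⟩ := h
  by_contra hne
  -- otherwise `t` would be a right inversion of `w * t`, which is shorter than `w`
  have h0 : cs.inversionParity w t = 0 := by
    generalize cs.inversionParity w t = a at hne
    revert a; decide
  have h1 : cs.inversionParity (w * t) t = 1 := by
    rw [inversionParity_mul, ht.mul_self, one_mul, ht.inv, ht.inversionParity_self, h0, add_zero]
  obtain ⟨ω, hω, hwt⟩ := cs.exists_isReduced (w * t)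
  rw [hwt] at h1
  have := (cs.isRightInversion_of_mem_rightInvSeq hω
    (cs.mem_rightInvSeq_of_inversionParity_eq_one h1)).2
  rw [← hwt, mul_assoc, ht.mul_self, mul_one] at this
  omega

theorem IsRightInversion.mem_rightInvSeq {w t : W} (h : cs.IsRightInversion w t) {ω : List B}
    (hω : cs.wordProd ω = w) : t ∈ cs.rightInvSeq ω :=
  cs.mem_rightInvSeq_of_inversionParity_eq_one (hω ▸ h.inversionParity_eq_one)

theorem IsLeftInversion.mem_leftInvSeq {w t : W} (h : cs.IsLeftInversion w t) {ω : List B}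
    (hω : cs.wordProd ω = w) : t ∈ cs.leftInvSeq ω := by
  have := (cs.isRightInversion_inv_iff.mpr h).mem_rightInvSeq (ω := ω.reverse)
    (by rw [wordProd_reverse, hω])
  rwa [rightInvSeq_reverse, List.mem_reverse] at this

theorem IsLeftInversion.length_mul_mul_add_two_le_or {y t r : W} (ht : cs.IsLeftInversion y t)
    (hr : cs.IsLeftInversion y r) (htr : t ≠ r) :
    cs.length (t * r * y) + 2 ≤ cs.length y ∨ cs.length (r * t * y) + 2 ≤ cs.length y := by
  obtain ⟨ω, hω, rfl⟩ := cs.exists_isReduced y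
  obtain ⟨a, ha, rfl⟩ := List.mem_iff_getElem.mp (ht.mem_leftInvSeq rfl)
  obtain ⟨b, hb, rfl⟩ := List.mem_iff_getElem.mp (hr.mem_leftInvSeq rfl)
  rw [length_leftInvSeq] at ha hb
  rw [hω.eq, ← List.getD_eq_getElem _ 1, ← List.getD_eq_getElem _ 1]
  rcases lt_trichotomy a b with hab | rfl | hba
  · exact Or.inl (cs.length_getD_leftInvSeq_mul_getD_leftInvSeq_mul_wordProd_add_two_le ω hab hb)
  · exact absurd rfl htr
  · exact Or.inr (cs.length_getD_leftInvSeq_mul_getD_leftInvSeq_mul_wordProd_add_two_le ω hba ha)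

end CoxeterSystem

section ReachesIn

variable {α : Type*} {r : α → α → Prop}

lemma reachesIn_of_forall_lt (f : ℕ → α) :
    ∀ {m : ℕ}, (∀ j < m, r (f (j + 1)) (f j)) → reachesIn r m (f m) (f 0)
  | 0, _ => rfl
  | m + 1, h => ⟨f m, h m m.lt_succ_self, reachesIn_of_forall_lt f fun j hj => h j (by omega)⟩

lemma reflTransGen_of_reachesIn :
    ∀ {m : ℕ} {x y : α}, reachesIn r m x y → Relation.ReflTransGen r x y
  | 0, _, _, h => h ▸ Relation.ReflTransGen.refl
  | _ + 1, _, _, ⟨_, hxz, hzy⟩ => Relation.ReflTransGen.head hxz (reflTransGen_of_reachesIn hzy)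

lemma exists_reachesIn_of_reflTransGen {x y : α}
    (h : Relation.ReflTransGen r x y) : ∃ m, reachesIn r m x y := by
  induction h using Relation.ReflTransGen.head_induction_on with
  | refl => exact ⟨0, rfl⟩
  | head hxz _ ih =>
    obtain ⟨m, hm⟩ := ih
    exact ⟨m + 1, _, hxz, hm⟩

end ReachesIn

lemma exists_valley_of_no_peak {f : ℕ → ℕ} {n : ℕ} (hne : ∀ j < n, f j ≠ f (j + 1))
    (hpeak : ∀ j, j + 2 ≤ n → f j < f (j + 1) → f (j + 1) ≤ f (j + 2)) :
    ∃ K ≤ n, (∀ j < K, f (j + 1) < f j) ∧ ∀ j, K ≤ j → j < n → f j < f (j + 1) := by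
  induction n with
  | zero => exact ⟨0, le_rfl, by simp, fun j _ hj => absurd hj j.not_lt_zero⟩
  | succ n ih =>
    obtain ⟨K, hK, hdown, hup⟩ :=
      ih (fun j hj => hne j (by omega)) (fun j hj => hpeak j (by omega))
    rcases (hne n n.lt_succ_self).lt_or_gt with hlt | hgt
    · refine ⟨K, by omega, hdown, fun j hKj hj => ?_⟩
      rcases Nat.lt_succ_iff_lt_or_eq.mp hj with hj | rfl
      exacts [hup j hKj hj, hlt]
    · obtain rfl : K = n := by
        by_contra hKn
        obtain ⟨m, rfl⟩ : ∃ m, n = m + 1 := ⟨n - 1, by omega⟩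
        exact absurd (hpeak m (by omega) (hup m (by omega) (by omega))) (not_le.mpr hgt)
      refine ⟨K + 1, le_rfl, fun j hj => ?_, fun j hj hj' => by omega⟩
      rcases Nat.lt_succ_iff_lt_or_eq.mp hj with hj | rfl
      exacts [hdown j hj, hgt]

section BruhatGraph

variable {B W : Type*} [Group W] {M : CoxeterMatrix B} (cs : CoxeterSystem M W)

def IsReflectionFactorization (x : W) (l : List W) : Prop :=
  (∀ t ∈ l, cs.IsReflection t) ∧ l.prod = x

lemma exists_isReflectionFactorization_length_eq_absLen (x : W) :
    ∃ l, IsReflectionFactorization cs x l ∧ l.length = absLen cs x := by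
  obtain ⟨l, hlen, hl⟩ := Nat.sInf_mem (s := {k | ∃ l : List W, l.length = k ∧
    (∀ t ∈ l, cs.IsReflection t) ∧ l.prod = x}) <| by
    obtain ⟨ω, -, rfl⟩ := cs.exists_isReduced x
    exact ⟨_, _, rfl, by simpa using fun i _ => cs.isReflection_simple i, rfl⟩
  exact ⟨l, hl, hlen⟩

variable {cs}

lemma al_le_of_reachesIn {v u : W} {m : ℕ} (h : reachesIn (edge cs) m v u) : al cs v u ≤ m :=
  Nat.sInf_le h

lemma reachesIn_al {v u : W} (h : bruhatLe cs v u) : reachesIn (edge cs) (al cs v u) v u :=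
  Nat.sInf_mem (exists_reachesIn_of_reflTransGen h)

lemma IsReflectionFactorization.append {x y : W} {l l' : List W}
    (hl : IsReflectionFactorization cs x l) (hl' : IsReflectionFactorization cs y l') :
    IsReflectionFactorization cs (x * y) (l ++ l') :=
  ⟨fun t ht => (List.mem_append.mp ht).elim (hl.1 t) (hl'.1 t),
    by rw [List.prod_append, hl.2, hl'.2]⟩

lemma IsReflectionFactorization.reverse {x : W} {l : List W}
    (hl : IsReflectionFactorization cs x l) : IsReflectionFactorization cs x⁻¹ l.reverse := by
  refine ⟨fun t ht => hl.1 t (List.mem_reverse.mp ht), ?_⟩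
  rw [← hl.2, List.prod_inv_reverse, List.map_congr_left fun t ht => (hl.1 t ht).inv, List.map_id']

lemma absLen_le_length {x : W} {l : List W} (hl : IsReflectionFactorization cs x l) :
    absLen cs x ≤ l.length :=
  Nat.sInf_le ⟨l, rfl, hl⟩

lemma exists_isReflectionFactorization_of_reachesIn :
    ∀ {m : ℕ} {x y : W}, reachesIn (edge cs) m x y →
      ∃ l, l.length = m ∧ IsReflectionFactorization cs (y * x⁻¹) l
  | 0, x, _, rfl => ⟨[], rfl, by simp, by simp⟩
  | _ + 1, x, y, ⟨_, ⟨⟨t, ht, rfl⟩, _⟩, hrest⟩ => by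
    obtain ⟨l, rfl, hl⟩ := exists_isReflectionFactorization_of_reachesIn hrest
    refine ⟨l ++ [t], by simp, ?_⟩
    have ht' : IsReflectionFactorization cs t [t] := ⟨by simpa using ht, by simp⟩
    simpa [mul_assoc] using hl.append ht'

lemma IsReflectionFactorization.replace {x : W} {A C : List W} {t r a b : W}
    (hl : IsReflectionFactorization cs x (A ++ t :: r :: C)) (ha : cs.IsReflection a)
    (hb : cs.IsReflection b) (hab : a * b = t * r) :
    IsReflectionFactorization cs x (A ++ a :: b :: C) := by
  refine ⟨fun s hs => ?_, ?_⟩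
  · simp only [List.mem_append, List.mem_cons] at hs
    rcases hs with hs | rfl | rfl | hs
    exacts [hl.1 s (by simp [hs]), ha, hb, hl.1 s (by simp [hs])]
  · rw [← hl.2]
    simp [← mul_assoc, hab]

lemma absLen_lt_length_of_append_cons_cons_self {x t : W} {A C : List W}
    (hl : IsReflectionFactorization cs x (A ++ t :: t :: C)) :
    absLen cs x < (A ++ t :: t :: C).length := by
  have ht : cs.IsReflection t := hl.1 t (by simp)
  have hAC : IsReflectionFactorization cs x (A ++ C) :=
    ⟨fun s hs => hl.1 s (by simp only [List.mem_append, List.mem_cons] at hs ⊢; tauto), by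
      rw [← hl.2]; simp [← mul_assoc, ht.mul_self]⟩
  have := absLen_le_length hAC
  simp only [List.length_append, List.length_cons] at this ⊢
  omega

theorem absLen_mul_inv_le_al_add_al {u v w : W} (hu : bruhatLe cs v u) (hw : bruhatLe cs v w) :
    absLen cs (u * w⁻¹) ≤ al cs v u + al cs v w := by
  obtain ⟨l₁, hl₁, hf₁⟩ := exists_isReflectionFactorization_of_reachesIn (reachesIn_al hu)
  obtain ⟨l₂, hl₂, hf₂⟩ := exists_isReflectionFactorization_of_reachesIn (reachesIn_al hw)
  have := absLen_le_length (hf₁.append hf₂.reverse)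
  simpa [hl₁, hl₂, mul_assoc] using this

end BruhatGraph

section Walks

variable {B W : Type*} [Group W] {M : CoxeterMatrix B} (cs : CoxeterSystem M W)

def walkVertex (l : List W) (w : W) (j : ℕ) : W := (l.drop j).prod * w

noncomputable def walkPotential (l : List W) (w : W) : ℕ :=
  ∑ j ∈ Finset.range (l.length + 1), cs.length (walkVertex l w j)

@[simp] lemma walkVertex_zero (l : List W) (w : W) : walkVertex l w 0 = l.prod * w := by
  simp [walkVertex]

@[simp] lemma walkVertex_length (l : List W) (w : W) : walkVertex l w l.length = w := by
  simp [walkVertex]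

lemma walkVertex_eq_getElem_mul {l : List W} (w : W) {j : ℕ} (hj : j < l.length) :
    walkVertex l w j = l[j] * walkVertex l w (j + 1) := by
  rw [walkVertex, List.drop_eq_getElem_cons hj, List.prod_cons, mul_assoc, walkVertex]

lemma walkVertex_append_of_le (A L : List W) (w : W) {j : ℕ} (hj : j ≤ A.length) :
    walkVertex (A ++ L) w j = (A.drop j).prod * L.prod * w := by
  rw [walkVertex, List.drop_append_of_le_length hj, List.prod_append]

lemma walkVertex_append_add (A L : List W) (w : W) (k : ℕ) :
    walkVertex (A ++ L) w (A.length + k) = walkVertex L w k := by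
  rw [walkVertex, List.drop_length_add_append, walkVertex]

lemma walkVertex_cons_cons_add_two (x y : W) (C : List W) (w : W) (k : ℕ) :
    walkVertex (x :: y :: C) w (k + 2) = walkVertex C w k :=
  rfl

lemma walkVertex_append_cons_cons_succ (A C : List W) (x y w : W) :
    walkVertex (A ++ x :: y :: C) w (A.length + 1) = y * (C.prod * w) := by
  simp [walkVertex, mul_assoc]

variable {cs}

lemma length_walkVertex_ne {l : List W} (hl : ∀ t ∈ l, cs.IsReflection t) (w : W) {j : ℕ}
    (hj : j < l.length) : cs.length (walkVertex l w j) ≠ cs.length (walkVertex l w (j + 1)) := by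
  rw [walkVertex_eq_getElem_mul w hj]
  exact (hl _ (List.getElem_mem hj)).length_mul_right_ne _

lemma edge_walkVertex_succ {l : List W} (hl : ∀ t ∈ l, cs.IsReflection t) (w : W) {j : ℕ}
    (hj : j < l.length) (h : cs.length (walkVertex l w (j + 1)) < cs.length (walkVertex l w j)) :
    edge cs (walkVertex l w (j + 1)) (walkVertex l w j) :=
  ⟨⟨l[j], hl _ (List.getElem_mem hj), walkVertex_eq_getElem_mul w hj⟩, h⟩

lemma edge_walkVertex {l : List W} (hl : ∀ t ∈ l, cs.IsReflection t) (w : W) {j : ℕ}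
    (hj : j < l.length) (h : cs.length (walkVertex l w j) < cs.length (walkVertex l w (j + 1))) :
    edge cs (walkVertex l w j) (walkVertex l w (j + 1)) := by
  refine ⟨⟨l[j], hl _ (List.getElem_mem hj), ?_⟩, h⟩
  rw [walkVertex_eq_getElem_mul w hj, ← mul_assoc, (hl _ (List.getElem_mem hj)).mul_self, one_mul]

lemma walkPotential_append_cons_cons_lt (A C : List W) {t r a b : W} (w : W)
    (hab : a * b = t * r) (h : cs.length (b * (C.prod * w)) < cs.length (r * (C.prod * w))) :
    walkPotential cs (A ++ a :: b :: C) w < walkPotential cs (A ++ t :: r :: C) w := by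
  rw [walkPotential, walkPotential, List.length_append, List.length_append, List.length_cons,
    List.length_cons, List.length_cons, List.length_cons]
  refine Finset.sum_lt_sum (fun j _ => ?_) ⟨A.length + 1, by simp, by
    simpa only [walkVertex_append_cons_cons_succ] using h⟩
  rcases lt_trichotomy j (A.length + 1) with hj | rfl | hj
  · rw [walkVertex_append_of_le _ _ _ (by omega), walkVertex_append_of_le _ _ _ (by omega)]
    simp only [List.prod_cons, ← mul_assoc, hab, le_refl]
  · simpa only [walkVertex_append_cons_cons_succ] using h.le
  · obtain ⟨k, rfl⟩ : ∃ k, j = A.length + (k + 2) := ⟨j - A.length - 2, by omega⟩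
    rw [walkVertex_append_add, walkVertex_append_add, walkVertex_cons_cons_add_two,
      walkVertex_cons_cons_add_two]

lemma exists_walkPotential_lt_of_peak {x : W} {l : List W} (w : W)
    (hl : IsReflectionFactorization cs x l) (hmin : l.length = absLen cs x) {i : ℕ}
    (hi : i + 2 ≤ l.length)
    (hup : cs.length (walkVertex l w i) < cs.length (walkVertex l w (i + 1)))
    (hdown : cs.length (walkVertex l w (i + 2)) < cs.length (walkVertex l w (i + 1))) :
    ∃ l', IsReflectionFactorization cs x l' ∧ l'.length = l.length ∧
      walkPotential cs l' w < walkPotential cs l w := by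
  obtain ⟨A, t, r, C, rfl, rfl⟩ : ∃ A t r C, l = A ++ t :: r :: C ∧ A.length = i :=
    ⟨l.take i, l[i], l[i + 1], l.drop (i + 2), by simp, by simp; omega⟩
  have ht : cs.IsReflection t := hl.1 t (by simp)
  have hr : cs.IsReflection r := hl.1 r (by simp)
  obtain ⟨y, hy⟩ : ∃ y, y = r * (C.prod * w) := ⟨_, rfl⟩
  have hrr : ∀ z, r * (r * z) = z := fun z => by rw [← mul_assoc, hr.mul_self, one_mul]
  have hCw : C.prod * w = r * y := by rw [hy, hrr]
  have hv₀ : walkVertex (A ++ t :: r :: C) w A.length = t * y := by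
    rw [walkVertex_append_of_le _ _ _ le_rfl, hy]
    simp [mul_assoc]
  have hv₁ : walkVertex (A ++ t :: r :: C) w (A.length + 1) = y := by
    rw [walkVertex_append_cons_cons_succ, hy]
  have hv₂ : walkVertex (A ++ t :: r :: C) w (A.length + 2) = r * y := by
    rw [walkVertex_append_add, ← zero_add 2, walkVertex_cons_cons_add_two, walkVertex_zero, hCw]
  rw [hv₀, hv₁] at hup
  rw [hv₁, hv₂] at hdown
  by_cases htr : t = r
  · subst htr
    exact absurd hmin (absLen_lt_length_of_append_cons_cons_self hl).ne'
  · have hty : cs.IsLeftInversion y t := ⟨ht, hup⟩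
    rcases hty.length_mul_mul_add_two_le_or ⟨hr, hdown⟩ htr with h | h
    · have hab : t * r * t * t = t * r := by rw [mul_assoc, ht.mul_self, mul_one]
      refine ⟨_, hl.replace (by simpa [ht.inv] using hr.conj t) ht hab, by simp,
        walkPotential_append_cons_cons_lt A C w hab ?_⟩
      rw [hCw, hrr, ← mul_assoc]
      omega
    · have hab : r * (r * t * r) = t * r := by rw [mul_assoc r t, hrr]
      refine ⟨_, hl.replace hr (by simpa [hr.inv] using ht.conj r) hab, by simp,
        walkPotential_append_cons_cons_lt A C w hab ?_⟩
      rw [hCw, hrr, mul_assoc (r * t), hrr]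
      omega

variable (cs)

theorem exists_bruhatLe_bruhatLe_al_add_al_le (u w : W) :
    ∃ v, bruhatLe cs v u ∧ bruhatLe cs v w ∧ al cs v u + al cs v w ≤ absLen cs (u * w⁻¹) := by
  obtain ⟨l, ⟨hl, hlen⟩, hmin⟩ := (InvImage.wf (walkPotential cs · w) wellFounded_lt).has_min
    {l | IsReflectionFactorization cs (u * w⁻¹) l ∧ l.length = absLen cs (u * w⁻¹)}
    (exists_isReflectionFactorization_length_eq_absLen cs _)
  -- a factorization of least potential has no peak, so its lengths decrease and then increase
  obtain ⟨K, hK, hdown, hup⟩ :=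
    exists_valley_of_no_peak (f := fun j => cs.length (walkVertex l w j))
      (fun j hj => length_walkVertex_ne hl.1 w hj) fun j hj h₁ => not_lt.mp fun h₂ => by
        obtain ⟨l', hl', hlen', hlt⟩ := exists_walkPotential_lt_of_peak w hl hlen hj h₁ h₂
        exact hmin l' ⟨hl', hlen' ▸ hlen⟩ hlt
  have hvu : reachesIn (edge cs) K (walkVertex l w K) u := by
    simpa [hl.2] using reachesIn_of_forall_lt (walkVertex l w) fun j hj =>
      edge_walkVertex_succ hl.1 w (by omega) (hdown j hj)
  have hvw : reachesIn (edge cs) (l.length - K) (walkVertex l w K) w := by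
    have := reachesIn_of_forall_lt (fun j => walkVertex l w (l.length - j)) (m := l.length - K)
      fun j hj => by
        rw [show l.length - j = l.length - (j + 1) + 1 by omega]
        exact edge_walkVertex hl.1 w (by omega) (hup _ (by omega) (by omega))
    simpa [Nat.sub_sub_self hK] using this
  refine ⟨_, reflTransGen_of_reachesIn hvu, reflTransGen_of_reachesIn hvw, ?_⟩
  have := al_le_of_reachesIn hvu
  have := al_le_of_reachesIn hvw
  omega

end Walks

theorem exists_meet_with_al_sum_general {B W : Type*} [Group W] {M : CoxeterMatrix B}
    (cs : CoxeterSystem M W) (u w : W) :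
    ∃ v : W, bruhatLe cs v u ∧ bruhatLe cs v w ∧
      al cs v u + al cs v w = absLen cs (u * w⁻¹) := by
  obtain ⟨v, hvu, hvw, hle⟩ := exists_bruhatLe_bruhatLe_al_add_al_le cs u w
  exact ⟨v, hvu, hvw, le_antisymm hle (absLen_mul_inv_le_al_add_al hvu hvw)⟩

/-- Let `(W,S)` be a Coxeter system whose group `W` is finite. For all
`u, w ∈ W` there exists `v ∈ W` with `v ≤ u`, `v ≤ w` and `al(v,u) + al(v,w) = ℓ′(u w⁻¹)`. -/
theorem exists_meet_with_al_sum {B W : Type*} [Group W] [Finite W] {M : CoxeterMatrix B}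
    (cs : CoxeterSystem M W) (u w : W) :
    ∃ v : W, bruhatLe cs v u ∧ bruhatLe cs v w ∧
      al cs v u + al cs v w = absLen cs (u * w⁻¹) :=
  exists_meet_with_al_sum_general cs u w
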